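/- Let (T,d,μ) and (T',d',μ') be compact measured ℝ-trees with marked pairs of points (x_i,y_i), 1 ≤ i ≤ k, in T and (x_i',y_i') in T'. Let (T̂,d̂,μ̂) and (T̂',d̂',μ̂') be the quotient measured metric spaces obtained by identifying x_i with y_i (resp. x_i' with y_i') for each i. Then d_GHP(T̂, T̂') ≤ (k+1)·d_GHP^{2k,1}((T,d,x,μ),(T',d',x',μ')), where x = (x_1,…,x_k,y_1,…,y_k) and similarly x'. -/

import Mathlib

/-!
Statement 7: gluing marked pairs of points in measured ℝ-trees increases the
GHP distance by at most a factor (k+1):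
d_GHP(T̂, T̂') ≤ (k+1) · d_GHP^{2k,1}((T,d,x,μ),(T',d',x',μ')).

The quotient (glued) space is represented by the quotient pseudo-distance
`glueDist` on the original space (the GHP distance, being defined through
correspondences and couplings, only depends on this pseudo-distance and the
measures).
-/

open MeasureTheory Set
open scoped ENNReal

/-- Geodesic metric space: any two points are joined by an isometric path. -/
def IsGeodesicSpace (X : Type) [MetricSpace X] : Prop :=
  ∀ x y : X, ∃ f : ℝ → X, f 0 = x ∧ f (dist x y) = y ∧
    ∀ s ∈ Icc (0 : ℝ) (dist x y), ∀ t ∈ Icc (0 : ℝ) (dist x y),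
      dist (f s) (f t) = |s - t|

/-- No embedded cycle: no continuous injective image of the circle. -/
def NoEmbeddedCycle (X : Type) [TopologicalSpace X] : Prop :=
  ¬ ∃ f : AddCircle (1 : ℝ) → X, Continuous f ∧ Function.Injective f

/-- An ℝ-tree is an acyclic geodesic metric space. -/
def IsRTree (X : Type) [MetricSpace X] : Prop :=
  IsGeodesicSpace X ∧ NoEmbeddedCycle X

/-- Sum of distances along a chain of identified pairs. -/
def chainSum {T : Type} (d : T → T → ℝ) : T → T → List (T × T) → ℝ
  | a, b, [] => d a b
  | a, b, p :: L => d a p.1 + chainSum d p.2 b L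

/-- The quotient pseudo-distance on `T` obtained by identifying the two
coordinates of each pair in `R` (glueing). -/
noncomputable def glueDist {T : Type} [MetricSpace T] (R : Set (T × T))
    (a b : T) : ℝ :=
  sInf {s | ∃ L : List (T × T), (∀ p ∈ L, p ∈ R ∨ Prod.swap p ∈ R) ∧
    s = chainSum (fun u v => dist u v) a b L}

/-- A correspondence between `X` and `Y`. -/
def IsCorrespondence {X Y : Type} (C : Set (X × Y)) : Prop :=
  (∀ x : X, ∃ y : Y, (x, y) ∈ C) ∧ ∀ y : Y, ∃ x : X, (x, y) ∈ C

/-- The distortion of `C` with respect to given (pseudo-)distances. -/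
noncomputable def disOf {X Y : Type} (dX : X → X → ℝ) (dY : Y → Y → ℝ)
    (C : Set (X × Y)) : ℝ≥0∞ :=
  ⨆ p ∈ C, ⨆ q ∈ C, ENNReal.ofReal |dX p.1 q.1 - dY p.2 q.2|

/-- Total variation norm of the difference of two finite measures. -/
noncomputable def tvDist {X : Type} [MeasurableSpace X]
    (μ ν : Measure X) : ℝ≥0∞ :=
  (⨆ (s : Set X) (_ : MeasurableSet s), μ s - ν s) +
    ⨆ (s : Set X) (_ : MeasurableSet s), ν s - μ s

/-- Discrepancy of `π` with respect to `μ` and `ν`. -/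
noncomputable def discrepancy {X Y : Type} [MeasurableSpace X] [MeasurableSpace Y]
    (μ : Measure X) (ν : Measure Y) (π : Measure (X × Y)) : ℝ≥0∞ :=
  tvDist μ (π.map Prod.fst) + tvDist ν (π.map Prod.snd)

/-- GHP distance computed for arbitrary (pseudo-)distances `dX`, `dY`, with a
set `marks` of marked pairs that every admissible correspondence must
contain.  With `marks = ∅` this is the (pseudo-)GHP distance; with the set of
marked pairs it is the marked distance `d_GHP^{k,1}`. -/
noncomputable def ghpOf {X Y : Type} [MeasurableSpace X] [MeasurableSpace Y]
    (dX : X → X → ℝ) (dY : Y → Y → ℝ)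
    (μ : Measure X) (ν : Measure Y) (marks : Set (X × Y)) : ℝ≥0∞ :=
  ⨅ (C : Set (X × Y)) (_ : IsCorrespondence C) (_ : MeasurableSet C)
    (_ : marks ⊆ C) (π : Measure (X × Y)),
    (disOf dX dY C / 2) ⊔ discrepancy μ ν π ⊔ π Cᶜ


/-!
The glued distance is the infimum of the lengths of chains that jump across identified pairs.
A correspondence `C` containing all marked pairs carries a chain from `a` to `a'` to a chain
from `b` to `b'` with the corresponding jumps, each distance term changing by at most `dis C`.
A chain never needs to cross the same pair twice (the loop in between can be cut out), so it has
at most `k` jumps and `k + 1` distance terms; hence `dis Ĉ ≤ (k + 1) dis C`. The measure terms of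
the GHP functional are unaffected, so the bound passes to the infimum.
-/

section Chains

variable {X : Type} [PseudoMetricSpace X]

lemma chainSum_nonneg (L : List (X × X)) (a b : X) : 0 ≤ chainSum dist a b L := by
  induction L generalizing a with
  | nil => exact dist_nonneg
  | cons p L ih => exact add_nonneg dist_nonneg (ih p.2)

lemma chainSum_append_cons {α : Type} (d : α → α → ℝ) (A : List (α × α)) (q : α × α)
    (B : List (α × α)) (a b : α) :
    chainSum d a b (A ++ q :: B) = chainSum d a q.1 A + chainSum d q.2 b B := by
  induction A generalizing a with
  | nil => rfl
  | cons r A ih => simp only [List.cons_append, chainSum, ih]; ring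

lemma chainSum_le_dist_add (L : List (X × X)) (a b c : X) :
    chainSum dist a b L ≤ dist a c + chainSum dist c b L := by
  cases L with
  | nil => exact dist_triangle a c b
  | cons r L => simp only [chainSum]; linarith [dist_triangle a c r.1]

lemma chainSum_suffix_le (A : List (X × X)) (q : X × X) (B : List (X × X)) (a b : X) :
    chainSum dist q.2 b B ≤ chainSum dist a b (A ++ q :: B) := by
  rw [chainSum_append_cons]
  linarith [chainSum_nonneg A a q.1]

lemma exists_sublist_nodup_chainSum_le (L : List (X × X)) :
    ∃ L' : List (X × X), L'.Sublist L ∧ (L'.map fun p => s(p.1, p.2)).Nodup ∧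
      ∀ a b, chainSum dist a b L' ≤ chainSum dist a b L := by
  induction L with
  | nil => exact ⟨[], List.Sublist.slnil, List.nodup_nil, fun _ _ => le_rfl⟩
  | cons p L ih =>
    obtain ⟨L'', hsub, hnd, hle⟩ := ih
    by_cases hp : s(p.1, p.2) ∈ L''.map fun p => s(p.1, p.2)
    · obtain ⟨q, hq, hqp⟩ := List.mem_map.mp hp
      obtain ⟨A, B, rfl⟩ := List.append_of_mem hq
      have hndB : ((q :: B).map fun p => s(p.1, p.2)).Nodup :=
        hnd.sublist ((List.sublist_append_right A _).map _)
      have hBL : B.Sublist L :=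
        ((List.sublist_cons_self q B).trans (List.sublist_append_right A _)).trans hsub
      have hsuffix : ∀ c b, chainSum dist q.2 b B ≤ chainSum dist c b L :=
        fun c b => (chainSum_suffix_le A q B c b).trans (hle c b)
      rcases Sym2.mk_eq_mk_iff.mp hqp.symm with rfl | rfl
      · refine ⟨p :: B, hBL.cons_cons p, hndB, fun a b => ?_⟩
        simp only [chainSum]
        linarith [hsuffix p.2 b]
      · refine ⟨B, hBL.trans (List.sublist_cons_self _ L), (List.nodup_cons.mp hndB).2,
          fun a b => ?_⟩
        simp only [chainSum, Prod.fst_swap, Prod.snd_swap]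
        linarith [hsuffix q.1 b, chainSum_le_dist_add B a b q.2]
    · refine ⟨p :: L'', hsub.cons_cons p, List.nodup_cons.mpr ⟨hp, hnd⟩, fun a b => ?_⟩
      simp only [chainSum]
      linarith [hle p.2 b]

end Chains

def IsGlueChain {X : Type} (R : Set (X × X)) (L : List (X × X)) : Prop :=
  ∀ p ∈ L, p ∈ R ∨ p.swap ∈ R

lemma IsGlueChain.sublist {X : Type} {R : Set (X × X)} {L L' : List (X × X)}
    (hL : IsGlueChain R L) (h : L'.Sublist L) : IsGlueChain R L' :=
  fun p hp => hL p (h.subset hp)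

lemma IsGlueChain.length_le {X ι : Type} [Fintype ι] {f : ι → X × X} {L : List (X × X)}
    (hL : IsGlueChain (range f) L) (hnd : (L.map fun p => s(p.1, p.2)).Nodup) :
    L.length ≤ Fintype.card ι := by
  classical
  have hsub : (L.map fun p => s(p.1, p.2)).toFinset ⊆
      Finset.univ.image fun i => s((f i).1, (f i).2) := by
    intro z hz
    obtain ⟨p, hp, rfl⟩ := List.mem_map.mp (List.mem_toFinset.mp hz)
    rcases hL p hp with ⟨i, rfl⟩ | ⟨i, hi⟩
    · exact Finset.mem_image_of_mem _ (Finset.mem_univ i)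
    · refine Finset.mem_image.mpr ⟨i, Finset.mem_univ i, ?_⟩
      rw [hi, Sym2.eq_swap]
      rfl
  calc L.length = (L.map fun p => s(p.1, p.2)).toFinset.card := by
        rw [List.toFinset_card_of_nodup hnd, List.length_map]
    _ ≤ (Finset.univ.image fun i => s((f i).1, (f i).2)).card := Finset.card_le_card hsub
    _ ≤ Fintype.card ι := Finset.card_image_le

section Transfer

variable {X Y : Type} [PseudoMetricSpace X] [PseudoMetricSpace Y]

lemma IsGlueChain.exists_chainSum_le {RX : Set (X × X)} {RY : Set (Y × Y)} {C : Set (X × Y)}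
    {e : ℝ} (hR : ∀ p ∈ RX, ∃ q ∈ RY, (p.1, q.1) ∈ C ∧ (p.2, q.2) ∈ C)
    (he : ∀ p ∈ C, ∀ q ∈ C, dist p.2 q.2 ≤ dist p.1 q.1 + e) {L : List (X × X)}
    (hL : IsGlueChain RX L) {a a' : X} {b b' : Y} (ha : (a, b) ∈ C) (ha' : (a', b') ∈ C) :
    ∃ L' : List (Y × Y), IsGlueChain RY L' ∧
      chainSum dist b b' L' ≤ chainSum dist a a' L + (L.length + 1) * e := by
  induction L generalizing a b with
  | nil =>
    exact ⟨[], fun _ h => absurd h List.not_mem_nil, by simpa [chainSum] using he _ ha _ ha'⟩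
  | cons p L ih =>
    have hstep : ∃ q : Y × Y, (q ∈ RY ∨ q.swap ∈ RY) ∧ (p.1, q.1) ∈ C ∧ (p.2, q.2) ∈ C := by
      rcases hL p List.mem_cons_self with hp | hp
      · obtain ⟨q, hq, h1, h2⟩ := hR p hp
        exact ⟨q, Or.inl hq, h1, h2⟩
      · obtain ⟨q, hq, h1, h2⟩ := hR p.swap hp
        exact ⟨q.swap, Or.inr hq, h2, h1⟩
    obtain ⟨q, hq, h1, h2⟩ := hstep
    obtain ⟨L', hL', hle⟩ := ih (fun r hr => hL r (List.mem_cons_of_mem p hr)) h2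
    refine ⟨q :: L', fun r hr => ?_, ?_⟩
    · rcases List.mem_cons.mp hr with rfl | hr
      exacts [hq, hL' r hr]
    · simp only [chainSum, List.length_cons, Nat.cast_succ]
      linarith [he _ ha _ h1]

end Transfer

section Glue

variable {X Y : Type} [MetricSpace X] [MetricSpace Y]

lemma glueDist_le_chainSum {R : Set (X × X)} {L : List (X × X)} (hL : IsGlueChain R L)
    (a b : X) : glueDist R a b ≤ chainSum dist a b L :=
  csInf_le ⟨0, by rintro _ ⟨L, -, rfl⟩; exact chainSum_nonneg L a b⟩ ⟨L, hL, rfl⟩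

lemma le_glueDist {R : Set (X × X)} {a b : X} {c : ℝ}
    (h : ∀ L, IsGlueChain R L → c ≤ chainSum dist a b L) : c ≤ glueDist R a b :=
  le_csInf ⟨_, [], fun _ h => absurd h List.not_mem_nil, rfl⟩ (by
    rintro _ ⟨L, hL, rfl⟩
    exact h L hL)

lemma glueDist_le_glueDist_add {ι : Type} [Fintype ι] {f : ι → X × X} {g : ι → Y × Y}
    {C : Set (X × Y)} (hfg : ∀ i, ((f i).1, (g i).1) ∈ C ∧ ((f i).2, (g i).2) ∈ C)
    {e : ℝ} (he0 : 0 ≤ e) (he : ∀ p ∈ C, ∀ q ∈ C, |dist p.1 q.1 - dist p.2 q.2| ≤ e)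
    {a a' : X} {b b' : Y} (ha : (a, b) ∈ C) (ha' : (a', b') ∈ C) :
    glueDist (range g) b b' ≤ glueDist (range f) a a' + (Fintype.card ι + 1) * e := by
  rw [← sub_le_iff_le_add]
  refine le_glueDist fun L hL => ?_
  obtain ⟨L₀, hsub, hnd, hL₀⟩ := exists_sublist_nodup_chainSum_le L
  have hL₀chain := hL.sublist hsub
  have hR : ∀ p ∈ range f, ∃ q ∈ range g, (p.1, q.1) ∈ C ∧ (p.2, q.2) ∈ C := by
    rintro _ ⟨i, rfl⟩
    exact ⟨g i, ⟨i, rfl⟩, hfg i⟩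
  have he' : ∀ p ∈ C, ∀ q ∈ C, dist p.2 q.2 ≤ dist p.1 q.1 + e := fun p hp q hq => by
    linarith [(abs_sub_le_iff.mp (he p hp q hq)).2]
  obtain ⟨L', hL', hle⟩ := hL₀chain.exists_chainSum_le hR he' ha ha'
  have hlen : ((L₀.length : ℝ) + 1) * e ≤ (Fintype.card ι + 1) * e := by
    gcongr
    exact_mod_cast hL₀chain.length_le hnd
  linarith [glueDist_le_chainSum hL' b b', hL₀ a a']

end Glue

section Distortion

variable {X Y : Type} {dX : X → X → ℝ} {dY : Y → Y → ℝ} {C : Set (X × Y)}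

lemma abs_sub_le_toReal_disOf (h : disOf dX dY C ≠ ⊤) {p q : X × Y} (hp : p ∈ C) (hq : q ∈ C) :
    |dX p.1 q.1 - dY p.2 q.2| ≤ (disOf dX dY C).toReal :=
  (ENNReal.ofReal_le_iff_le_toReal h).mp (le_iSup₂_of_le p hp (le_iSup₂_of_le q hq le_rfl))

lemma disOf_le_ofReal {r : ℝ} (h : ∀ p ∈ C, ∀ q ∈ C, |dX p.1 q.1 - dY p.2 q.2| ≤ r) :
    disOf dX dY C ≤ ENNReal.ofReal r :=
  iSup₂_le fun p hp => iSup₂_le fun q hq => ENNReal.ofReal_le_ofReal (h p hp q hq)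

end Distortion

lemma disOf_glueDist_le {X Y ι : Type} [MetricSpace X] [MetricSpace Y] [Fintype ι]
    {f : ι → X × X} {g : ι → Y × Y} {C : Set (X × Y)}
    (hfg : ∀ i, ((f i).1, (g i).1) ∈ C ∧ ((f i).2, (g i).2) ∈ C) :
    disOf (glueDist (range f)) (glueDist (range g)) C
      ≤ (Fintype.card ι + 1) * disOf (fun a b => dist a b) (fun a b => dist a b) C := by
  by_cases htop : disOf (fun a b => dist a b) (fun a b => dist a b) C = ⊤
  · simp [htop]
  set e := (disOf (fun a b => dist a b) (fun a b => dist a b) C).toReal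
  have he : ∀ p ∈ C, ∀ q ∈ C, |dist p.1 q.1 - dist p.2 q.2| ≤ e :=
    fun p hp q hq => abs_sub_le_toReal_disOf htop hp hq
  have he_swap : ∀ p ∈ Prod.swap ⁻¹' C, ∀ q ∈ Prod.swap ⁻¹' C,
      |dist p.1 q.1 - dist p.2 q.2| ≤ e :=
    fun p hp q hq => abs_sub_comm (dist p.2 q.2) _ ▸ he _ hp _ hq
  calc disOf (glueDist (range f)) (glueDist (range g)) C
      ≤ ENNReal.ofReal ((Fintype.card ι + 1) * e) := by
        refine disOf_le_ofReal fun p hp q hq => abs_sub_le_iff.mpr ⟨?_, ?_⟩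
        · linarith [glueDist_le_glueDist_add (C := Prod.swap ⁻¹' C)
            hfg ENNReal.toReal_nonneg he_swap
            (show (p.2, p.1) ∈ Prod.swap ⁻¹' C from hp)
            (show (q.2, q.1) ∈ Prod.swap ⁻¹' C from hq)]
        · linarith [glueDist_le_glueDist_add hfg ENNReal.toReal_nonneg he hp hq]
    _ = (Fintype.card ι + 1) * disOf (fun a b => dist a b) (fun a b => dist a b) C := by
        rw [ENNReal.ofReal_mul (by positivity), ENNReal.ofReal_toReal htop,
          ENNReal.ofReal_add (Nat.cast_nonneg _) zero_le_one, ENNReal.ofReal_natCast,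
          ENNReal.ofReal_one]

lemma ghpOf_le_mul_of_disOf_le {X Y : Type} [MeasurableSpace X] [MeasurableSpace Y]
    {dX dX' : X → X → ℝ} {dY dY' : Y → Y → ℝ} {μ : Measure X} {ν : Measure Y}
    {M : Set (X × Y)} {c : ℝ≥0∞} (hc : 1 ≤ c) (hc_top : c ≠ ⊤)
    (hdis : ∀ C, M ⊆ C → disOf dX' dY' C ≤ c * disOf dX dY C) :
    ghpOf dX' dY' μ ν ∅ ≤ c * ghpOf dX dY μ ν M := by
  simp only [ghpOf, ENNReal.mul_iInf_of_ne (one_pos.trans_le hc).ne' hc_top]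
  refine le_iInf fun C => le_iInf fun hC => le_iInf fun hCm => le_iInf fun hMC =>
    le_iInf fun π => ?_
  refine iInf₂_le_of_le C hC <| iInf₂_le_of_le hCm (empty_subset C) <| iInf_le_of_le π ?_
  have hle : ∀ a, a ≤ c * a := fun a => le_mul_of_one_le_left zero_le hc
  refine sup_le (sup_le ?_ ((hle _).trans ?_)) ((hle _).trans ?_)
  · calc disOf dX' dY' C / 2 ≤ c * (disOf dX dY C / 2) := by
          rw [← mul_div_assoc]
          exact ENNReal.div_le_div_right (hdis C hMC) 2
      _ ≤ _ := by gcongr; exact le_sup_left.trans le_sup_left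
  · gcongr; exact le_sup_right.trans le_sup_left
  · gcongr; exact le_sup_right

theorem ghp_of_glued_trees_le_general
    {T T' : Type} [MetricSpace T] [MetricSpace T']
    [MeasurableSpace T] [MeasurableSpace T']
    (μ : Measure T) (ν : Measure T')
    (k : ℕ) (x y : Fin k → T) (x' y' : Fin k → T') :
    ghpOf (glueDist (Set.range fun i => (x i, y i)))
        (glueDist (Set.range fun i => (x' i, y' i))) μ ν ∅
      ≤ ((k : ℝ≥0∞) + 1) *
        ghpOf (fun a b => dist a b) (fun a b => dist a b) μ ν
          (Set.range (fun i => (x i, x' i)) ∪ Set.range fun i => (y i, y' i)) := by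
  refine ghpOf_le_mul_of_disOf_le le_add_self (by simp) fun C hMC => ?_
  simpa using disOf_glueDist_le (f := fun i => (x i, y i)) (g := fun i => (x' i, y' i))
    fun i => ⟨hMC (Or.inl ⟨i, rfl⟩), hMC (Or.inr ⟨i, rfl⟩)⟩

theorem ghp_of_glued_trees_le
    {T T' : Type} [MetricSpace T] [MetricSpace T']
    [MeasurableSpace T] [BorelSpace T] [MeasurableSpace T'] [BorelSpace T']
    [CompactSpace T] [CompactSpace T'] [Nonempty T] [Nonempty T']
    (hT : IsRTree T) (hT' : IsRTree T')
    (μ : Measure T) (ν : Measure T') [IsFiniteMeasure μ] [IsFiniteMeasure ν]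
    (k : ℕ) (x y : Fin k → T) (x' y' : Fin k → T') :
    ghpOf (glueDist (Set.range fun i => (x i, y i)))
        (glueDist (Set.range fun i => (x' i, y' i))) μ ν ∅
      ≤ ((k : ℝ≥0∞) + 1) *
        ghpOf (fun a b => dist a b) (fun a b => dist a b) μ ν
          (Set.range (fun i => (x i, x' i)) ∪ Set.range fun i => (y i, y' i)) :=
  ghp_of_glued_trees_le_general μ ν k x y x' y'
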